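/- arXiv:2012.15047 — 5 statements merged into one kernel-verified Lean document; each statement's English description precedes it below -/
import Mathlib

section
/- Let X = (X_1,...,X_L) ~ Multinomial(d, p) with L ≥ 2 and all p_ℓ > 0, and let Y = Σ_{ℓ=1}^L (X_ℓ - d·p_ℓ)²/(d·p_ℓ). Then Var(Y) = (1 - 1/d)·2(L-1) + (1/d)·(L/h(p) - L²), where h(p) = (L⁻¹ Σ_ℓ p_ℓ⁻¹)⁻¹ is the harmonic mean of the entries of p. -/
open Finset Nat

namespace ChiSqAux

/-- real falling factorial as a product -/
noncomputable def fd (k : ℕ) (t : ℝ) : ℝ := ∏ m ∈ Finset.range k, (t - m)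

lemma fd_zero (t : ℝ) : fd 0 t = 1 := by simp [fd]

lemma fd_cast (n k : ℕ) : ((n.descFactorial k : ℕ) : ℝ) = fd k (n : ℝ) := by
  induction k with
  | zero => simp [fd]
  | succ k ih =>
    rcases le_or_gt (k+1) n with h | h
    · rw [Nat.descFactorial_succ, fd, Finset.prod_range_succ, ← fd, ← ih]
      push_cast [Nat.cast_sub (by omega : k ≤ n)]
      ring
    · rw [Nat.descFactorial_eq_zero_iff_lt.mpr h, Nat.cast_zero, fd]
      exact (Finset.prod_eq_zero (Finset.mem_range.mpr (by omega : n < k + 1)) (by norm_num)).symm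

lemma fd_one (t : ℝ) : fd 1 t = t := by simp [fd]
lemma fd_two (t : ℝ) : fd 2 t = t * (t - 1) := by simp [fd, Finset.prod_range_succ]
lemma fd_three (t : ℝ) : fd 3 t = t * (t - 1) * (t - 2) := by
  simp [fd, Finset.prod_range_succ]
lemma fd_four (t : ℝ) : fd 4 t = t * (t - 1) * (t - 2) * (t - 3) := by
  simp [fd, Finset.prod_range_succ]

lemma fd_eq_zero {n k : ℕ} (h : n < k) : fd k (n : ℝ) = 0 :=
  Finset.prod_eq_zero (Finset.mem_range.mpr h) (by norm_num)

/-- multinomial theorem specialised -/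
lemma momA (L n : ℕ) (p : Fin L → ℝ) :
    ∑ x ∈ Finset.Nat.antidiagonalTuple L n,
      ((Nat.multinomial Finset.univ x : ℝ) * ∏ ℓ, p ℓ ^ x ℓ) = (∑ ℓ, p ℓ) ^ n := by
  rw [Finset.sum_pow_eq_sum_piAntidiag, Finset.piAntidiag_univ_fin_eq_antidiagonalTuple]

lemma key (L : ℕ) (y r : Fin L → ℕ) :
    Nat.multinomial Finset.univ (y + r) * ∏ ℓ, (y ℓ + r ℓ).descFactorial (r ℓ)
      = (∑ ℓ, y ℓ + ∑ ℓ, r ℓ).descFactorial (∑ ℓ, r ℓ) * Nat.multinomial Finset.univ y := by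
  have h1 : ∀ ℓ : Fin L, (y ℓ) ! * ((y ℓ + r ℓ).descFactorial (r ℓ)) = (y ℓ + r ℓ) ! := by
    intro ℓ
    have := Nat.factorial_mul_descFactorial (Nat.le_add_left (r ℓ) (y ℓ))
    simpa [Nat.add_sub_cancel] using this
  have h2 : (∏ ℓ, ((y + r) ℓ) !) * Nat.multinomial Finset.univ (y + r)
      = (∑ ℓ, y ℓ + ∑ ℓ, r ℓ) ! := by
    have := Nat.multinomial_spec Finset.univ (y + r)
    simpa [Pi.add_apply, Finset.sum_add_distrib] using this
  have h3 : (∏ ℓ, (y ℓ) !) * Nat.multinomial Finset.univ y = (∑ ℓ, y ℓ) ! :=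
    Nat.multinomial_spec Finset.univ y
  have h4 : (∑ ℓ, y ℓ) ! * (∑ ℓ, y ℓ + ∑ ℓ, r ℓ).descFactorial (∑ ℓ, r ℓ)
      = (∑ ℓ, y ℓ + ∑ ℓ, r ℓ) ! := by
    have := Nat.factorial_mul_descFactorial (Nat.le_add_left (∑ ℓ, r ℓ) (∑ ℓ, y ℓ))
    simpa [Nat.add_sub_cancel] using this
  have hpos : 0 < (∏ ℓ, (y ℓ) !) * (∑ ℓ, y ℓ) ! :=
    Nat.mul_pos (Finset.prod_pos fun ℓ _ => Nat.factorial_pos _) (Nat.factorial_pos _)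
  apply Nat.eq_of_mul_eq_mul_right hpos
  calc Nat.multinomial Finset.univ (y + r) * (∏ ℓ, (y ℓ + r ℓ).descFactorial (r ℓ))
        * ((∏ ℓ, (y ℓ) !) * (∑ ℓ, y ℓ) !)
      = (∏ ℓ, (y ℓ) ! * (y ℓ + r ℓ).descFactorial (r ℓ)) * Nat.multinomial Finset.univ (y + r)
          * (∑ ℓ, y ℓ) ! := by
        rw [Finset.prod_mul_distrib]; ring
    _ = (∏ ℓ, ((y + r) ℓ) !) * Nat.multinomial Finset.univ (y + r) * (∑ ℓ, y ℓ) ! := by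
        rw [Finset.prod_congr rfl fun ℓ _ => h1 ℓ]; rfl
    _ = (∑ ℓ, y ℓ + ∑ ℓ, r ℓ) ! * (∑ ℓ, y ℓ) ! := by rw [h2]
    _ = ((∑ ℓ, y ℓ) ! * (∑ ℓ, y ℓ + ∑ ℓ, r ℓ).descFactorial (∑ ℓ, r ℓ))
          * ((∏ ℓ, (y ℓ) !) * Nat.multinomial Finset.univ y) := by rw [h4, h3, Nat.mul_comm]
    _ = (∑ ℓ, y ℓ + ∑ ℓ, r ℓ).descFactorial (∑ ℓ, r ℓ) * Nat.multinomial Finset.univ y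
          * ((∏ ℓ, (y ℓ) !) * (∑ ℓ, y ℓ) !) := by ring

lemma momB (L d : ℕ) (p : Fin L → ℝ) (hsum : ∑ ℓ, p ℓ = 1) (r : Fin L → ℕ) :
    ∑ x ∈ Finset.Nat.antidiagonalTuple L d,
      (((Nat.multinomial Finset.univ x : ℝ) * ∏ ℓ, p ℓ ^ x ℓ) * ∏ ℓ, fd (r ℓ) (x ℓ))
    = fd (∑ ℓ, r ℓ) d * ∏ ℓ, p ℓ ^ r ℓ := by
  set R := ∑ ℓ, r ℓ with hR
  have hvanish : ∀ x : Fin L → ℕ, (¬ ∀ ℓ, r ℓ ≤ x ℓ) →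
      (((Nat.multinomial Finset.univ x : ℝ) * ∏ ℓ, p ℓ ^ x ℓ) * ∏ ℓ, fd (r ℓ) (x ℓ)) = 0 := by
    intro x hx
    push_neg at hx
    obtain ⟨ℓ, hℓ⟩ := hx
    have h0 : ∏ ℓ, fd (r ℓ) ((x ℓ : ℕ) : ℝ) = 0 :=
      Finset.prod_eq_zero (Finset.mem_univ ℓ) (fd_eq_zero hℓ)
    rw [h0, mul_zero]
  rcases le_or_gt R d with hRd | hRd
  · rw [← Finset.sum_filter_of_ne (p := fun x => ∀ ℓ, r ℓ ≤ x ℓ)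
      (fun x _ hne => by by_contra hc; exact hne (hvanish x hc))]
    have hbij : ∑ x ∈ (Finset.Nat.antidiagonalTuple L d).filter (fun x => ∀ ℓ, r ℓ ≤ x ℓ),
        (((Nat.multinomial Finset.univ x : ℝ) * ∏ ℓ, p ℓ ^ x ℓ) * ∏ ℓ, fd (r ℓ) (x ℓ))
        = ∑ y ∈ Finset.Nat.antidiagonalTuple L (d - R),
          (((Nat.multinomial Finset.univ (y + r) : ℝ) * ∏ ℓ, p ℓ ^ (y ℓ + r ℓ))
            * ∏ ℓ, fd (r ℓ) ((y ℓ + r ℓ : ℕ) : ℝ)) := by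
      refine (Finset.sum_nbij' (fun y => y + r) (fun x ℓ => x ℓ - r ℓ) ?_ ?_ ?_ ?_ ?_).symm
      · intro y hy
        rw [Finset.Nat.mem_antidiagonalTuple] at hy
        rw [Finset.mem_filter, Finset.Nat.mem_antidiagonalTuple]
        constructor
        · simp only [Pi.add_apply, Finset.sum_add_distrib, hy, ← hR]
          omega
        · intro ℓ; simp [Pi.add_apply]
      · intro x hx
        rw [Finset.mem_filter, Finset.Nat.mem_antidiagonalTuple] at hx
        rw [Finset.Nat.mem_antidiagonalTuple]
        rw [Finset.sum_tsub_distrib _ (fun ℓ _ => hx.2 ℓ), hx.1, hR]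
      · intro y hy; funext ℓ; simp [Pi.add_apply]
      · intro x hx
        rw [Finset.mem_filter] at hx
        funext ℓ
        simp only [Pi.add_apply]
        exact Nat.sub_add_cancel (hx.2 ℓ)
      · intro x hx; rfl
    rw [hbij]
    have hterm : ∀ y ∈ Finset.Nat.antidiagonalTuple L (d - R),
        (((Nat.multinomial Finset.univ (y + r) : ℝ) * ∏ ℓ, p ℓ ^ (y ℓ + r ℓ))
            * ∏ ℓ, fd (r ℓ) ((y ℓ + r ℓ : ℕ) : ℝ))
        = (fd R d * ∏ ℓ, p ℓ ^ r ℓ) *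
            ((Nat.multinomial Finset.univ y : ℝ) * ∏ ℓ, p ℓ ^ y ℓ) := by
      intro y hy
      rw [Finset.Nat.mem_antidiagonalTuple] at hy
      have hsy : ∑ ℓ, y ℓ + R = d := by rw [hR] at hRd ⊢; omega
      have hk := key L y r
      rw [← hR, hsy] at hk
      have hkR := congrArg (Nat.cast : ℕ → ℝ) hk
      push_cast [fd_cast] at hkR
      have hpow : (∏ ℓ, p ℓ ^ (y ℓ + r ℓ)) = (∏ ℓ, p ℓ ^ y ℓ) * ∏ ℓ, p ℓ ^ r ℓ := by
        rw [← Finset.prod_mul_distrib]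
        exact Finset.prod_congr rfl fun ℓ _ => pow_add _ _ _
      push_cast
      linear_combination (∏ ℓ, p ℓ ^ (y ℓ + r ℓ)) * hkR
        + (fd R (d : ℝ) * (Nat.multinomial Finset.univ y : ℝ)) * hpow
    rw [Finset.sum_congr rfl hterm, ← Finset.mul_sum, momA, hsum, one_pow, mul_one]
  · rw [fd_eq_zero hRd, zero_mul]
    refine Finset.sum_eq_zero fun x hx => ?_
    rw [Finset.Nat.mem_antidiagonalTuple] at hx
    refine hvanish x fun hall => ?_
    have : R ≤ d := hx ▸ Finset.sum_le_sum fun ℓ _ => hall ℓ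
    omega

variable {L d : ℕ} {p : Fin L → ℝ}

lemma mom_single (hsum : ∑ ℓ, p ℓ = 1) (i : Fin L) (a : ℕ) :
    ∑ x ∈ Finset.Nat.antidiagonalTuple L d,
      (((Nat.multinomial Finset.univ x : ℝ) * ∏ ℓ, p ℓ ^ x ℓ) * fd a (x i))
    = fd a d * p i ^ a := by
  have h := momB L d p hsum (Pi.single i a)
  have h1 : ∑ ℓ, (Pi.single i a : Fin L → ℕ) ℓ = a := by simp
  have h2 : ∀ x : Fin L → ℕ, ∏ ℓ, fd ((Pi.single i a : Fin L → ℕ) ℓ) ((x ℓ : ℕ) : ℝ) = fd a (x i) := by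
    intro x
    rw [Finset.prod_eq_single i (fun b _ hb => by rw [Pi.single_eq_of_ne hb, fd_zero])
      (fun h => absurd (Finset.mem_univ i) h), Pi.single_eq_same]
  have h3 : ∏ ℓ, p ℓ ^ (Pi.single i a : Fin L → ℕ) ℓ = p i ^ a := by
    rw [Finset.prod_eq_single i (fun b _ hb => by rw [Pi.single_eq_of_ne hb, pow_zero])
      (fun h => absurd (Finset.mem_univ i) h), Pi.single_eq_same]
  rw [h1, h3] at h
  rw [← h]
  exact Finset.sum_congr rfl fun x _ => by rw [h2 x]

lemma mom_pair (hsum : ∑ ℓ, p ℓ = 1) {i j : Fin L} (hij : i ≠ j) (a b : ℕ) :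
    ∑ x ∈ Finset.Nat.antidiagonalTuple L d,
      (((Nat.multinomial Finset.univ x : ℝ) * ∏ ℓ, p ℓ ^ x ℓ) * (fd a (x i) * fd b (x j)))
    = fd (a + b) d * (p i ^ a * p j ^ b) := by
  have h := momB L d p hsum (((Pi.single i a + Pi.single j b : Fin L → ℕ)))
  have hri : (((Pi.single i a + Pi.single j b : Fin L → ℕ))) i = a := by
    simp [Pi.single_eq_of_ne hij]
  have hrj : (((Pi.single i a + Pi.single j b : Fin L → ℕ))) j = b := by
    simp [Pi.single_eq_of_ne hij.symm]
  have hro : ∀ ℓ, ℓ ≠ i → ℓ ≠ j → (((Pi.single i a + Pi.single j b : Fin L → ℕ))) ℓ = 0 := by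
    intro ℓ h1 h2; simp [Pi.single_eq_of_ne h1, Pi.single_eq_of_ne h2]
  have h1 : ∑ ℓ, (((Pi.single i a + Pi.single j b : Fin L → ℕ))) ℓ = a + b := by
    simp [Finset.sum_add_distrib]
  have hps : ∀ {M : Type} [CommMonoid M] (g : Fin L → M),
      (∀ ℓ, ℓ ≠ i → ℓ ≠ j → g ℓ = 1) → ∏ ℓ, g ℓ = g i * g j := by
    intro M _ g hg
    rw [← Finset.prod_pair hij]
    refine (Finset.prod_subset (Finset.subset_univ _) fun ℓ _ hℓ => ?_).symm
    simp only [Finset.mem_insert, Finset.mem_singleton] at hℓ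
    push_neg at hℓ
    exact hg ℓ hℓ.1 hℓ.2
  have h2 : ∀ x : Fin L → ℕ,
      ∏ ℓ, fd ((((Pi.single i a + Pi.single j b : Fin L → ℕ))) ℓ) ((x ℓ : ℕ) : ℝ)
        = fd a (x i) * fd b (x j) := by
    intro x
    rw [hps _ (fun ℓ ha hb => by rw [hro ℓ ha hb, fd_zero]), hri, hrj]
  have h3 : ∏ ℓ, p ℓ ^ (((Pi.single i a + Pi.single j b : Fin L → ℕ))) ℓ = p i ^ a * p j ^ b := by
    rw [hps _ (fun ℓ ha hb => by rw [hro ℓ ha hb, pow_zero]), hri, hrj]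
  rw [h1, h3] at h
  rw [← h]
  exact Finset.sum_congr rfl fun x _ => by rw [h2 x]

end ChiSqAux

open ChiSqAux

/-- For `X ~ Multinomial(d, p)` with `L ≥ 2` and all `p ℓ > 0`,
the Pearson chi-square statistic `Y = ∑ ℓ (X ℓ - d p ℓ)² / (d p ℓ)` has
variance `(1 - 1/d)·2(L-1) + (1/d)·(L/h(p) - L²)` where
`h(p) = (L⁻¹ ∑ ℓ, (p ℓ)⁻¹)⁻¹` is the harmonic mean of the entries of `p`.
Mean and second moment are written as finite sums over all outcomes. -/
theorem multinomial_chiSq_variance (L d : ℕ) (hL : 2 ≤ L) (hd : 0 < d)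
    (p : Fin L → ℝ) (hp : ∀ ℓ, 0 < p ℓ) (hsum : ∑ ℓ, p ℓ = 1) :
    (∑ x ∈ Finset.Nat.antidiagonalTuple L d,
        ((Nat.multinomial Finset.univ x : ℝ) * ∏ ℓ, p ℓ ^ x ℓ) *
          (∑ ℓ, ((x ℓ : ℝ) - d * p ℓ) ^ 2 / (d * p ℓ)) ^ 2)
      - (∑ x ∈ Finset.Nat.antidiagonalTuple L d,
          ((Nat.multinomial Finset.univ x : ℝ) * ∏ ℓ, p ℓ ^ x ℓ) *
            (∑ ℓ, ((x ℓ : ℝ) - d * p ℓ) ^ 2 / (d * p ℓ))) ^ 2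
      = (1 - 1 / (d : ℝ)) * (2 * (L - 1))
        + (1 / (d : ℝ)) * ((L : ℝ) / ((L : ℝ)⁻¹ * ∑ ℓ, (p ℓ)⁻¹)⁻¹ - (L : ℝ) ^ 2) := by
  have hd0 : (d : ℝ) ≠ 0 := Nat.cast_ne_zero.mpr hd.ne'
  have hL0 : (L : ℝ) ≠ 0 := Nat.cast_ne_zero.mpr (by omega)
  have hp0 : ∀ ℓ, p ℓ ≠ 0 := fun ℓ => (hp ℓ).ne'
  set A := Finset.Nat.antidiagonalTuple L d with hA
  set W : (Fin L → ℕ) → ℝ :=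
    fun x => (Nat.multinomial Finset.univ x : ℝ) * ∏ ℓ, p ℓ ^ x ℓ with hW
  set S : (Fin L → ℕ) → ℝ := fun x => ∑ ℓ, (x ℓ : ℝ) ^ 2 / p ℓ with hS
  -- basic moments
  have hE0 : ∑ x ∈ A, W x = 1 := by rw [hW, hA, momA, hsum, one_pow]
  have hEsq : ∀ i, ∑ x ∈ A, W x * (x i : ℝ) ^ 2 = fd 2 d * p i ^ 2 + d * p i := by
    intro i
    have e2 := mom_single (d := d) hsum i 2
    have e1 := mom_single (d := d) hsum i 1
    calc ∑ x ∈ A, W x * (x i : ℝ) ^ 2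
        = ∑ x ∈ A, (W x * fd 2 (x i) + W x * fd 1 (x i)) :=
          Finset.sum_congr rfl fun x _ => by rw [fd_two, fd_one]; ring
      _ = fd 2 d * p i ^ 2 + fd 1 d * p i ^ 1 := by
          rw [Finset.sum_add_distrib, e2, e1]
      _ = fd 2 d * p i ^ 2 + d * p i := by rw [fd_one, pow_one]
  have hEquart : ∀ i, ∑ x ∈ A, W x * (x i : ℝ) ^ 4
      = fd 4 d * p i ^ 4 + 6 * (fd 3 d * p i ^ 3) + 7 * (fd 2 d * p i ^ 2) + d * p i := by
    intro i
    have e4 := mom_single (d := d) hsum i 4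
    have e3 := mom_single (d := d) hsum i 3
    have e2 := mom_single (d := d) hsum i 2
    have e1 := mom_single (d := d) hsum i 1
    calc ∑ x ∈ A, W x * (x i : ℝ) ^ 4
        = ∑ x ∈ A, (W x * fd 4 (x i) + (6 : ℝ) * (W x * fd 3 (x i))
            + 7 * (W x * fd 2 (x i)) + W x * fd 1 (x i)) :=
          Finset.sum_congr rfl fun x _ => by
            rw [fd_four, fd_three, fd_two, fd_one]; ring
      _ = fd 4 d * p i ^ 4 + 6 * (fd 3 d * p i ^ 3) + 7 * (fd 2 d * p i ^ 2)
            + fd 1 d * p i ^ 1 := by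
          rw [Finset.sum_add_distrib, Finset.sum_add_distrib, Finset.sum_add_distrib,
            ← Finset.mul_sum, ← Finset.mul_sum, e4, e3, e2, e1]
      _ = _ := by rw [fd_one, pow_one]
  have hEpair : ∀ i j : Fin L, i ≠ j → ∑ x ∈ A, W x * ((x i : ℝ) ^ 2 * (x j : ℝ) ^ 2)
      = fd 4 d * (p i ^ 2 * p j ^ 2) + fd 3 d * (p i ^ 2 * p j ^ 1)
        + fd 3 d * (p i ^ 1 * p j ^ 2) + fd 2 d * (p i ^ 1 * p j ^ 1) := by
    intro i j hij
    have e22 := mom_pair (d := d) hsum hij 2 2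
    have e21 := mom_pair (d := d) hsum hij 2 1
    have e12 := mom_pair (d := d) hsum hij 1 2
    have e11 := mom_pair (d := d) hsum hij 1 1
    norm_num at e22 e21 e12 e11
    calc ∑ x ∈ A, W x * ((x i : ℝ) ^ 2 * (x j : ℝ) ^ 2)
        = ∑ x ∈ A, (W x * (fd 2 (x i) * fd 2 (x j)) + W x * (fd 2 (x i) * fd 1 (x j))
            + W x * (fd 1 (x i) * fd 2 (x j)) + W x * (fd 1 (x i) * fd 1 (x j))) :=
          Finset.sum_congr rfl fun x _ => by
            rw [fd_two, fd_two, fd_one, fd_one]; ring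
      _ = _ := by
          rw [Finset.sum_add_distrib, Finset.sum_add_distrib, Finset.sum_add_distrib,
            e22, e21, e12, e11]
          norm_num
  -- pointwise formula for the chi-square statistic
  have hY : ∀ x ∈ A, (∑ ℓ, ((x ℓ : ℝ) - d * p ℓ) ^ 2 / (d * p ℓ)) = S x * (1 / d) - d := by
    intro x hx
    have hsx : (∑ ℓ, (x ℓ : ℝ)) = d := by
      rw [hA, Finset.Nat.mem_antidiagonalTuple] at hx
      rw [← hx]
      push_cast
      rfl
    calc ∑ ℓ, ((x ℓ : ℝ) - d * p ℓ) ^ 2 / (d * p ℓ)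
        = ∑ ℓ, ((x ℓ : ℝ) ^ 2 / p ℓ * (1 / d) - 2 * (x ℓ : ℝ) + d * p ℓ) := by
          refine Finset.sum_congr rfl fun ℓ _ => ?_
          field_simp [hd0, hp0 ℓ]
          ring
      _ = (∑ ℓ, (x ℓ : ℝ) ^ 2 / p ℓ) * (1 / d) - 2 * (∑ ℓ, (x ℓ : ℝ)) + d * ∑ ℓ, p ℓ := by
          rw [Finset.sum_add_distrib, Finset.sum_sub_distrib, ← Finset.sum_mul,
            ← Finset.mul_sum, ← Finset.mul_sum]
      _ = S x * (1 / d) - d := by rw [hsx, hsum, hS]; ring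
  -- first moment of S
  have hES : ∑ x ∈ A, W x * S x = fd 2 d + d * L := by
    calc ∑ x ∈ A, W x * S x
        = ∑ x ∈ A, ∑ ℓ, (W x * (x ℓ : ℝ) ^ 2) * (p ℓ)⁻¹ := by
          refine Finset.sum_congr rfl fun x _ => ?_
          rw [hS, Finset.mul_sum]
          exact Finset.sum_congr rfl fun ℓ _ => by rw [div_eq_mul_inv]; ring
      _ = ∑ ℓ, (∑ x ∈ A, W x * (x ℓ : ℝ) ^ 2) * (p ℓ)⁻¹ := by
          rw [Finset.sum_comm]
          exact Finset.sum_congr rfl fun ℓ _ => by rw [Finset.sum_mul]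
      _ = ∑ ℓ : Fin L, (fd 2 d * p ℓ + d) := by
          refine Finset.sum_congr rfl fun ℓ _ => ?_
          rw [hEsq ℓ]
          field_simp [hp0 ℓ]
      _ = fd 2 d + d * L := by
          rw [Finset.sum_add_distrib, ← Finset.mul_sum, hsum, mul_one, Finset.sum_const,
            Finset.card_univ, Fintype.card_fin, nsmul_eq_mul]
          ring
  -- second moment of S
  have hES2 : ∑ x ∈ A, W x * S x ^ 2
      = fd 4 d + (2 * L + 4) * fd 3 d + ((L : ℝ) ^ 2 + 6 * L) * fd 2 d
        + d * ∑ ℓ, (p ℓ)⁻¹ := by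
    have hF : ∑ x ∈ A, W x * S x ^ 2
        = ∑ i, ∑ j, (∑ x ∈ A, W x * ((x i : ℝ) ^ 2 * (x j : ℝ) ^ 2)) * (p i * p j)⁻¹ := by
      calc ∑ x ∈ A, W x * S x ^ 2
          = ∑ x ∈ A, ∑ i, ∑ j, (W x * ((x i : ℝ) ^ 2 * (x j : ℝ) ^ 2)) * (p i * p j)⁻¹ := by
            refine Finset.sum_congr rfl fun x _ => ?_
            rw [hS, sq, Finset.sum_mul_sum, Finset.mul_sum]
            refine Finset.sum_congr rfl fun i _ => ?_
            rw [Finset.mul_sum]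
            refine Finset.sum_congr rfl fun j _ => ?_
            rw [mul_inv]
            field_simp
        _ = ∑ i, ∑ x ∈ A, ∑ j, (W x * ((x i : ℝ) ^ 2 * (x j : ℝ) ^ 2)) * (p i * p j)⁻¹ :=
            Finset.sum_comm
        _ = _ := by
            refine Finset.sum_congr rfl fun i _ => ?_
            rw [Finset.sum_comm]
            exact Finset.sum_congr rfl fun j _ => by rw [Finset.sum_mul]
    rw [hF]
    have hFoff : ∀ i j : Fin L, i ≠ j →
        (∑ x ∈ A, W x * ((x i : ℝ) ^ 2 * (x j : ℝ) ^ 2)) * (p i * p j)⁻¹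
        = fd 4 d * (p i * p j) + fd 3 d * p i + fd 3 d * p j + fd 2 d := by
      intro i j hij
      rw [hEpair i j hij]
      field_simp [hp0 i, hp0 j]
    have hFdiag : ∀ i : Fin L,
        (∑ x ∈ A, W x * ((x i : ℝ) ^ 2 * (x i : ℝ) ^ 2)) * (p i * p i)⁻¹
        = fd 4 d * p i ^ 2 + 6 * (fd 3 d * p i) + 7 * fd 2 d + d * (p i)⁻¹ := by
      intro i
      have h4 : ∑ x ∈ A, W x * ((x i : ℝ) ^ 2 * (x i : ℝ) ^ 2)
          = ∑ x ∈ A, W x * (x i : ℝ) ^ 4 :=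
        Finset.sum_congr rfl fun x _ => by ring
      rw [h4, hEquart i]
      field_simp [hp0 i]
    have hGsum : ∀ i : Fin L,
        ∑ j, (fd 4 d * (p i * p j) + fd 3 d * p i + fd 3 d * p j + fd 2 d)
        = fd 4 d * p i + (L : ℝ) * (fd 3 d * p i) + fd 3 d + (L : ℝ) * fd 2 d := by
      intro i
      rw [Finset.sum_add_distrib, Finset.sum_add_distrib, Finset.sum_add_distrib,
        Finset.sum_const, Finset.sum_const, Finset.card_univ, Fintype.card_fin,
        ← Finset.mul_sum, ← Finset.mul_sum, ← Finset.mul_sum, hsum]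
      push_cast
      ring
    have hinner : ∀ i : Fin L,
        ∑ j, (∑ x ∈ A, W x * ((x i : ℝ) ^ 2 * (x j : ℝ) ^ 2)) * (p i * p j)⁻¹
        = fd 4 d * p i + ((L : ℝ) + 4) * (fd 3 d * p i) + fd 3 d
          + ((L : ℝ) + 6) * fd 2 d + d * (p i)⁻¹ := by
      intro i
      rw [← Finset.add_sum_erase _ _ (Finset.mem_univ i)]
      rw [Finset.sum_congr rfl (fun j hj => hFoff i j (Finset.ne_of_mem_erase hj).symm)]
      rw [Finset.sum_erase_eq_sub (Finset.mem_univ i), hGsum i, hFdiag i]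
      ring
    rw [Finset.sum_congr rfl fun i _ => hinner i]
    simp only [Finset.sum_add_distrib, ← Finset.mul_sum, Finset.sum_const,
      Finset.card_univ, Fintype.card_fin, nsmul_eq_mul, hsum, mul_one]
    push_cast
    ring
  -- rewrite the two big sums
  have hT2 : ∑ x ∈ A, W x * (∑ ℓ, ((x ℓ : ℝ) - d * p ℓ) ^ 2 / (d * p ℓ)) ^ 2
      = (∑ x ∈ A, W x * S x ^ 2) * (1 / (d : ℝ) ^ 2) - 2 * (∑ x ∈ A, W x * S x)
        + (d : ℝ) ^ 2 := by
    calc ∑ x ∈ A, W x * (∑ ℓ, ((x ℓ : ℝ) - d * p ℓ) ^ 2 / (d * p ℓ)) ^ 2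
        = ∑ x ∈ A, ((W x * S x ^ 2) * (1 / (d : ℝ) ^ 2) - 2 * (W x * S x)
            + (d : ℝ) ^ 2 * W x) := by
          refine Finset.sum_congr rfl fun x hx => ?_
          rw [hY x hx]
          field_simp
          ring
      _ = _ := by
          rw [Finset.sum_add_distrib, Finset.sum_sub_distrib, ← Finset.sum_mul,
            ← Finset.mul_sum, ← Finset.mul_sum, hE0, mul_one]
  have hT1 : ∑ x ∈ A, W x * (∑ ℓ, ((x ℓ : ℝ) - d * p ℓ) ^ 2 / (d * p ℓ))
      = (∑ x ∈ A, W x * S x) * (1 / (d : ℝ)) - d := by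
    calc ∑ x ∈ A, W x * (∑ ℓ, ((x ℓ : ℝ) - d * p ℓ) ^ 2 / (d * p ℓ))
        = ∑ x ∈ A, ((W x * S x) * (1 / (d : ℝ)) - (d : ℝ) * W x) := by
          refine Finset.sum_congr rfl fun x hx => ?_
          rw [hY x hx]
          ring
      _ = _ := by
          rw [Finset.sum_sub_distrib, ← Finset.sum_mul, ← Finset.mul_sum, hE0, mul_one]
  rw [hT2, hT1, hES, hES2]
  have hharm : (L : ℝ) / ((L : ℝ)⁻¹ * ∑ ℓ, (p ℓ)⁻¹)⁻¹ = ∑ ℓ, (p ℓ)⁻¹ := by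
    rw [div_eq_mul_inv, inv_inv, ← mul_assoc, mul_inv_cancel₀ hL0, one_mul]
  rw [hharm, fd_two, fd_three, fd_four]
  field_simp
  ring
end

section
/- Let W_1,...,W_n be i.i.d. zero-mean random variables with finite sixth moment and X_n = Σ_{i=1}^n W_i. Then E|X_n² - E[X_n²]|³ ≤ C·n³, where C = 2|κ_6| + 60|κ_4|κ_2 + 40κ_3² + 120κ_2³ and κ_i denotes the i-th cumulant of W_1. -/
/-!
For `a, c ≥ 0` one has `|a - c| ≤ a + c`. With `a = X²` and `c = E[X²]` this bounds the third
absolute central moment of `X²` by `E[(X² + E X²)³] = E X⁶ + 3 E X⁴ E X² + 4 (E X²)³`.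
For a sum `X` of `n` i.i.d. centred variables, binomial expansion and independence express
`E X²`, `E X⁴`, `E X⁶` through `n` and the moments of one summand; in cumulants the bound reads
`n κ₆ + 18 n² κ₄ κ₂ + 10 n² κ₃² + 28 n³ κ₂³`, which is at most `C n³` term by term.
-/

open MeasureTheory ProbabilityTheory Finset

section

variable {Ω : Type*} [MeasurableSpace Ω] {μ : Measure Ω}

lemma MeasureTheory.MemLp.integrable_pow_of_le [IsFiniteMeasure μ] {f : Ω → ℝ} {p k : ℕ}
    (hf : MemLp f p μ) (hk : k ≤ p) : Integrable (fun ω ↦ f ω ^ k) μ :=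
  ((hf.mono_exponent (mod_cast hk)).integrable_norm_pow').mono'
    (hf.aestronglyMeasurable.pow k) (by simp [norm_pow])

lemma ProbabilityTheory.IndepFun.integral_add_pow [IsFiniteMeasure μ] {X Y : Ω → ℝ}
    (hXY : IndepFun X Y μ) {k : ℕ} (hX : MemLp X k μ) (hY : MemLp Y k μ) :
    ∫ ω, (X ω + Y ω) ^ k ∂μ
      = ∑ j ∈ range (k + 1), (k.choose j : ℝ) * ((∫ ω, X ω ^ j ∂μ) * ∫ ω, Y ω ^ (k - j) ∂μ) := by
  have hpow (j : ℕ) : IndepFun (fun ω ↦ X ω ^ j) (fun ω ↦ Y ω ^ (k - j)) μ :=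
    hXY.comp (measurable_id.pow_const j) (measurable_id.pow_const (k - j))
  simp_rw [add_pow]
  rw [integral_finsetSum]
  · refine sum_congr rfl fun j _ ↦ ?_
    rw [integral_mul_const, (hpow j).integral_fun_mul_eq_mul_integral
      (hX.aestronglyMeasurable.pow j) (hY.aestronglyMeasurable.pow _), mul_comm]
  · intro j hj
    have hjk : j ≤ k := Nat.lt_succ_iff.mp (mem_range.mp hj)
    exact ((hpow j).integrable_mul (hX.integrable_pow_of_le hjk)
      (hY.integrable_pow_of_le (Nat.sub_le k j))).mul_const _

lemma ProbabilityTheory.iIndepFun.integral_sum_pow [IsProbabilityMeasure μ] {ι : Type*}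
    {W : ι → Ω → ℝ} (hW : iIndepFun W μ) (hL6 : ∀ i, MemLp (W i) 6 μ) {m : ℕ → ℝ}
    (hm : ∀ i, ∀ k ≤ 6, ∫ ω, W i ω ^ k ∂μ = m k) (hm1 : m 1 = 0) (s : Finset ι) :
    ∫ ω, ∑ i ∈ s, W i ω ∂μ = 0 ∧
    ∫ ω, (∑ i ∈ s, W i ω) ^ 2 ∂μ = #s * m 2 ∧
    ∫ ω, (∑ i ∈ s, W i ω) ^ 3 ∂μ = #s * m 3 ∧
    ∫ ω, (∑ i ∈ s, W i ω) ^ 4 ∂μ = #s * m 4 + 3 * #s * (#s - 1) * m 2 ^ 2 ∧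
    ∫ ω, (∑ i ∈ s, W i ω) ^ 6 ∂μ = #s * m 6 + 15 * #s * (#s - 1) * m 4 * m 2
      + 10 * #s * (#s - 1) * m 3 ^ 2 + 15 * #s * (#s - 1) * (#s - 2) * m 2 ^ 3 := by
  classical
  induction s using Finset.induction_on with
  | empty => simp
  | insert a s ha ih =>
    obtain ⟨ih1, ih2, ih3, ih4, ih6⟩ := ih
    have hS6 : MemLp (fun ω ↦ ∑ i ∈ s, W i ω) 6 μ := memLp_finsetSum s fun i _ ↦ hL6 i
    have hSW : IndepFun (fun ω ↦ ∑ i ∈ s, W i ω) (W a) μ := by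
      simpa only [Finset.sum_fn] using
        hW.indepFun_finsetSum_of_notMem₀ (fun i ↦ (hL6 i).aestronglyMeasurable.aemeasurable) ha
    have hm0 : m 0 = 1 := by simpa using (hm a 0 (by norm_num)).symm
    have key (k : ℕ) (hk : k ≤ 6) : ∫ ω, (∑ i ∈ insert a s, W i ω) ^ k ∂μ
        = ∑ j ∈ range (k + 1), (k.choose j : ℝ) * ((∫ ω, (∑ i ∈ s, W i ω) ^ j ∂μ) * m (k - j)) := by
      simp only [sum_insert ha, add_comm (W a _)]
      rw [hSW.integral_add_pow (hS6.mono_exponent (mod_cast hk))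
        ((hL6 a).mono_exponent (mod_cast hk))]
      exact sum_congr rfl fun j _ ↦ by rw [hm a (k - j) (by omega)]
    have key1 := key 1 (by norm_num)
    simp only [pow_one] at key1
    rw [card_insert_of_notMem ha]
    -- The fifth moment of the partial sum is never needed: in `E (S + W)⁶` it is multiplied by
    -- `E W = m 1 = 0`.
    refine ⟨key1.trans ?_, (key 2 (by norm_num)).trans ?_, (key 3 (by norm_num)).trans ?_,
      (key 4 (by norm_num)).trans ?_, (key 6 (by norm_num)).trans ?_⟩ <;>
    simp [sum_range_succ, Nat.choose, ih1, ih2, ih3, ih4, ih6, hm0, hm1] <;> ring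

lemma integral_abs_sq_sub_integral_pow_three_le [IsProbabilityMeasure μ] {X : Ω → ℝ}
    (hX : MemLp X 6 μ) :
    ∫ ω, |X ω ^ 2 - ∫ ω', X ω' ^ 2 ∂μ| ^ 3 ∂μ
      ≤ ∫ ω, X ω ^ 6 ∂μ + 3 * (∫ ω, X ω ^ 4 ∂μ) * ∫ ω, X ω ^ 2 ∂μ
        + 4 * (∫ ω, X ω ^ 2 ∂μ) ^ 3 := by
  set c := ∫ ω, X ω ^ 2 ∂μ
  have hc : 0 ≤ c := integral_nonneg fun ω ↦ sq_nonneg _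
  have h2 := hX.integrable_pow_of_le (k := 2) (by norm_num)
  have h4 := hX.integrable_pow_of_le (k := 4) (by norm_num)
  have h6 := hX.integrable_pow_of_le (k := 6) (by norm_num)
  have hexpand : (fun ω ↦ (X ω ^ 2 + c) ^ 3)
      = fun ω ↦ X ω ^ 6 + 3 * c * X ω ^ 4 + 3 * c ^ 2 * X ω ^ 2 + c ^ 3 := by
    ext ω; ring
  have hint : Integrable (fun ω ↦ (X ω ^ 2 + c) ^ 3) μ := by
    rw [hexpand]
    exact ((h6.add (h4.const_mul _)).add (h2.const_mul _)).add (integrable_const _)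
  calc ∫ ω, |X ω ^ 2 - c| ^ 3 ∂μ ≤ ∫ ω, (X ω ^ 2 + c) ^ 3 ∂μ := by
        refine integral_mono_of_nonneg (.of_forall fun ω ↦ by positivity) hint
          (.of_forall fun ω ↦ pow_le_pow_left₀ (abs_nonneg _) ?_ 3)
        have := sq_nonneg (X ω)
        exact abs_sub_le_iff.2 ⟨by linarith, by linarith⟩
    _ = ∫ ω, X ω ^ 6 ∂μ + 3 * c * ∫ ω, X ω ^ 4 ∂μ + 3 * c ^ 2 * c + c ^ 3 := by
        rw [hexpand, integral_add, integral_add, integral_add, integral_const_mul,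
          integral_const_mul, integral_const]
        · simp [c]
        all_goals fun_prop
    _ = _ := by ring

end

lemma cumulant_polynomial_le_mul_cube {N κ₂ κ₃ κ₄ κ₆ : ℝ} (hN : 1 ≤ N) (hκ₂ : 0 ≤ κ₂) :
    N * κ₆ + 18 * N ^ 2 * κ₄ * κ₂ + 10 * N ^ 2 * κ₃ ^ 2 + 28 * N ^ 3 * κ₂ ^ 3
      ≤ (2 * |κ₆| + 60 * |κ₄| * κ₂ + 40 * κ₃ ^ 2 + 120 * κ₂ ^ 3) * N ^ 3 := by
  have hN0 : 0 ≤ N := by linarith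
  have hN1 : N ≤ N ^ 3 := le_self_pow₀ hN (by norm_num)
  have hN2 : N ^ 2 ≤ N ^ 3 := pow_le_pow_right₀ hN (by norm_num)
  have h6 : N * κ₆ ≤ N ^ 3 * |κ₆| :=
    (mul_le_mul_of_nonneg_left (le_abs_self _) hN0).trans
      (mul_le_mul_of_nonneg_right hN1 (abs_nonneg _))
  have h4 : N ^ 2 * κ₄ ≤ N ^ 3 * |κ₄| :=
    (mul_le_mul_of_nonneg_left (le_abs_self _) (by positivity)).trans
      (mul_le_mul_of_nonneg_right hN2 (abs_nonneg _))
  have h3 : N ^ 2 * κ₃ ^ 2 ≤ N ^ 3 * κ₃ ^ 2 := mul_le_mul_of_nonneg_right hN2 (sq_nonneg _)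
  linarith [mul_le_mul_of_nonneg_right h4 hκ₂, mul_nonneg (pow_nonneg hN0 3) (abs_nonneg κ₆),
    mul_nonneg (pow_nonneg hN0 3) (sq_nonneg κ₃), mul_nonneg (pow_nonneg hN0 3) (pow_nonneg hκ₂ 3),
    mul_nonneg (mul_nonneg (pow_nonneg hN0 3) (abs_nonneg κ₄)) hκ₂]

theorem third_central_moment_of_square_sum_general
    {Ω : Type*} [MeasurableSpace Ω] (μ : Measure Ω) [IsProbabilityMeasure μ]
    (n : ℕ) (hn : 0 < n) (W : Fin n → Ω → ℝ)
    (hindep : iIndepFun W μ)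
    (hid : ∀ i, IdentDistrib (W i) (W ⟨0, hn⟩) μ μ)
    (hL6 : MemLp (W ⟨0, hn⟩) 6 μ)
    (hmean : ∫ ω, W ⟨0, hn⟩ ω ∂μ = 0)
    (m : ℕ → ℝ) (hm : ∀ k, m k = ∫ ω, (W ⟨0, hn⟩ ω) ^ k ∂μ) :
    ∫ ω, |(∑ i, W i ω) ^ 2 - ∫ ω', (∑ i, W i ω') ^ 2 ∂μ| ^ 3 ∂μ
      ≤ (2 * |m 6 - 15 * m 4 * m 2 - 10 * (m 3) ^ 2 + 30 * (m 2) ^ 3|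
          + 60 * |m 4 - 3 * (m 2) ^ 2| * m 2
          + 40 * (m 3) ^ 2
          + 120 * (m 2) ^ 3) * n ^ 3 := by
  have hW6 (i : Fin n) : MemLp (W i) 6 μ := (hid i).symm.memLp_snd hL6
  have hWm (i : Fin n) (k : ℕ) (_ : k ≤ 6) : ∫ ω, W i ω ^ k ∂μ = m k :=
    (hm k).symm ▸ ((hid i).comp (measurable_id.pow_const k)).integral_eq
  have hm1 : m 1 = 0 := by simpa [hm 1] using hmean
  have hm2 : 0 ≤ m 2 := (hm 2) ▸ integral_nonneg fun ω ↦ sq_nonneg _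
  obtain ⟨-, h2, -, h4, h6⟩ := hindep.integral_sum_pow hW6 hWm hm1 univ
  simp only [card_univ, Fintype.card_fin] at h2 h4 h6
  calc _ ≤ _ := integral_abs_sq_sub_integral_pow_three_le (memLp_finsetSum univ fun i _ ↦ hW6 i)
    _ = n * (m 6 - 15 * m 4 * m 2 - 10 * m 3 ^ 2 + 30 * m 2 ^ 3)
          + 18 * n ^ 2 * (m 4 - 3 * m 2 ^ 2) * m 2 + 10 * n ^ 2 * m 3 ^ 2
          + 28 * n ^ 3 * m 2 ^ 3 := by
      rw [h2, h4, h6]; ring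
    _ ≤ _ := cumulant_polynomial_le_mul_cube (by exact_mod_cast hn) hm2

/-- Let `W 1, ..., W n` be i.i.d. zero-mean random variables with
finite sixth moment and `Xₙ = ∑ i, W i`. Then
`E|Xₙ² - E[Xₙ²]|³ ≤ C n³`, where `C = 2|κ₆| + 60|κ₄|κ₂ + 40κ₃² + 120κ₂³` and the
cumulants of the zero-mean variable `W 1` are expressed via its moments:
`κ₂ = m₂`, `κ₃ = m₃`, `κ₄ = m₄ - 3m₂²`, `κ₆ = m₆ - 15 m₄ m₂ - 10 m₃² + 30 m₂³`. -/
theorem third_central_moment_of_square_sum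
    {Ω : Type*} [MeasurableSpace Ω] (μ : Measure Ω) [IsProbabilityMeasure μ]
    (n : ℕ) (hn : 0 < n) (W : Fin n → Ω → ℝ)
    (hWmeas : ∀ i, Measurable (W i))
    (hindep : iIndepFun W μ)
    (hid : ∀ i, IdentDistrib (W i) (W ⟨0, hn⟩) μ μ)
    (hL6 : MemLp (W ⟨0, hn⟩) 6 μ)
    (hmean : ∫ ω, W ⟨0, hn⟩ ω ∂μ = 0)
    (m : ℕ → ℝ) (hm : ∀ k, m k = ∫ ω, (W ⟨0, hn⟩ ω) ^ k ∂μ) :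
    ∫ ω, |(∑ i, W i ω) ^ 2 - ∫ ω', (∑ i, W i ω') ^ 2 ∂μ| ^ 3 ∂μ
      ≤ (2 * |m 6 - 15 * m 4 * m 2 - 10 * (m 3) ^ 2 + 30 * (m 2) ^ 3|
          + 60 * |m 4 - 3 * (m 2) ^ 2| * m 2
          + 40 * (m 3) ^ 2
          + 120 * (m 2) ^ 3) * n ^ 3 :=
  third_central_moment_of_square_sum_general μ n hn W hindep hid hL6 hmean m hm
end

section
/- Let ψ(x,y) = (x-y)²/y. For all (x,y) and (x',y') in [0,1] × [1/c, 1] with c > 1, |ψ(x',y') - ψ(x,y)| ≤ c·√(4 + (1+c)²)·|x-y|·‖δ‖ + 4c³·‖δ‖², where δ = (x - x', y - y') and ‖·‖ is the Euclidean norm. -/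
set_option maxHeartbeats 1000000

/-- For `ψ(x,y) = (x-y)²/y` and all `(x,y), (x',y')` in
`[0,1] × [1/c, 1]` with `c > 1`,
`|ψ(x',y') - ψ(x,y)| ≤ c √(4 + (1 + c)²) |x-y| ‖δ‖ + 4c³ ‖δ‖²`
where `δ = (x - x', y - y')` and `‖δ‖ = √((x-x')² + (y-y')²)`. -/
theorem psi_deviation_refined (c x y x' y' : ℝ) (hc : 1 < c)
    (hx : x ∈ Set.Icc (0 : ℝ) 1) (hx' : x' ∈ Set.Icc (0 : ℝ) 1)
    (hy : y ∈ Set.Icc (1 / c) 1) (hy' : y' ∈ Set.Icc (1 / c) 1) :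
    |(x' - y') ^ 2 / y' - (x - y) ^ 2 / y|
      ≤ c * Real.sqrt (4 + (1 + c) ^ 2) * |x - y| *
          Real.sqrt ((x - x') ^ 2 + (y - y') ^ 2)
        + 4 * c ^ 3 * ((x - x') ^ 2 + (y - y') ^ 2) := by
  obtain ⟨hx0, hx1⟩ := hx
  obtain ⟨hx'0, hx'1⟩ := hx'
  obtain ⟨hy0, hy1⟩ := hy
  obtain ⟨hy'0, hy'1⟩ := hy'
  have hc0 : (0 : ℝ) < c := lt_trans one_pos hc
  have hyp : 0 < y := lt_of_lt_of_le (by positivity) hy0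
  have hy'p : 0 < y' := lt_of_lt_of_le (by positivity) hy'0
  have hcy : 1 ≤ y * c := (div_le_iff₀ hc0).mp hy0
  have hcy' : 1 ≤ y' * c := (div_le_iff₀ hc0).mp hy'0
  set a := x - x' with ha
  set b := y - y' with hb
  set n := Real.sqrt (a ^ 2 + b ^ 2) with hndef
  have hn : 0 ≤ n := Real.sqrt_nonneg _
  have hn2 : n ^ 2 = a ^ 2 + b ^ 2 := by rw [hndef]; exact Real.sq_sqrt (by positivity)
  have key : (x' - y') ^ 2 / y' - (x - y) ^ 2 / y
      = (x - y) / y * ((-2) * a + (1 + x / y) * b)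
        + (y * a - x * b) ^ 2 / (y ^ 2 * y') := by
    rw [ha, hb]
    field_simp
    ring
  clear_value a b n
  clear ha hb hndef
  -- bound the quadratic remainder
  have h1 : (y * a - x * b) ^ 2 ≤ 2 * (a ^ 2 + b ^ 2) := by
    nlinarith [sq_nonneg (x * a + y * b),
      mul_nonneg (by nlinarith : (0:ℝ) ≤ 1 - x ^ 2) (by positivity : (0:ℝ) ≤ a ^ 2 + b ^ 2),
      mul_nonneg (by nlinarith : (0:ℝ) ≤ 1 - y ^ 2) (by positivity : (0:ℝ) ≤ a ^ 2 + b ^ 2)]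
  have h2a : 1 ≤ (y * c) * (y * c) := by nlinarith
  have h2 : 1 / (y ^ 2 * y') ≤ c ^ 3 := by
    rw [div_le_iff₀ (by positivity)]
    calc (1 : ℝ) = 1 * 1 := by ring
      _ ≤ ((y * c) * (y * c)) * (y' * c) :=
          mul_le_mul h2a hcy' zero_le_one (by positivity)
      _ = c ^ 3 * (y ^ 2 * y') := by ring
  have hR : (y * a - x * b) ^ 2 / (y ^ 2 * y') ≤ 4 * c ^ 3 * (a ^ 2 + b ^ 2) := by
    have e : (y * a - x * b) ^ 2 / (y ^ 2 * y')
        = (y * a - x * b) ^ 2 * (1 / (y ^ 2 * y')) := by ring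
    rw [e]
    calc (y * a - x * b) ^ 2 * (1 / (y ^ 2 * y'))
        ≤ (2 * (a ^ 2 + b ^ 2)) * c ^ 3 :=
          mul_le_mul h1 h2 (by positivity) (by positivity)
      _ ≤ 4 * c ^ 3 * (a ^ 2 + b ^ 2) := by
          have hS : 0 ≤ c ^ 3 * (a ^ 2 + b ^ 2) := by positivity
          nlinarith [hS]
  -- bound the linear term
  have ht0 : 0 ≤ x / y := div_nonneg hx0 hyp.le
  have htc : 1 + x / y ≤ 1 + c := by
    have : x / y ≤ c := by rw [div_le_iff₀ hyp]; nlinarith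
    linarith
  have hinner : |(-2) * a + (1 + x / y) * b| ≤ Real.sqrt (4 + (1 + x / y) ^ 2) * n := by
    have h3 : ((-2) * a + (1 + x / y) * b) ^ 2 ≤ (4 + (1 + x / y) ^ 2) * n ^ 2 := by
      rw [hn2]; nlinarith [sq_nonneg (2 * b + (1 + x / y) * a)]
    calc |(-2) * a + (1 + x / y) * b|
        = Real.sqrt (((-2) * a + (1 + x / y) * b) ^ 2) := (Real.sqrt_sq_eq_abs _).symm
      _ ≤ Real.sqrt ((4 + (1 + x / y) ^ 2) * n ^ 2) := Real.sqrt_le_sqrt h3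
      _ = Real.sqrt (4 + (1 + x / y) ^ 2) * Real.sqrt (n ^ 2) :=
          Real.sqrt_mul (by positivity) _
      _ = Real.sqrt (4 + (1 + x / y) ^ 2) * n := by rw [Real.sqrt_sq hn]
  have hst : Real.sqrt (4 + (1 + x / y) ^ 2) ≤ Real.sqrt (4 + (1 + c) ^ 2) := by
    apply Real.sqrt_le_sqrt
    nlinarith
  have hL : |(x - y) / y * ((-2) * a + (1 + x / y) * b)|
      ≤ c * Real.sqrt (4 + (1 + c) ^ 2) * |x - y| * n := by
    rw [abs_mul, abs_div, abs_of_pos hyp]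
    calc |x - y| / y * |(-2) * a + (1 + x / y) * b|
        ≤ (|x - y| * c) * (Real.sqrt (4 + (1 + c) ^ 2) * n) := by
          apply mul_le_mul ?_ ?_ (abs_nonneg _) (by positivity)
          · rw [div_le_iff₀ hyp]; nlinarith [abs_nonneg (x - y)]
          · exact hinner.trans (mul_le_mul_of_nonneg_right hst hn)
      _ = c * Real.sqrt (4 + (1 + c) ^ 2) * |x - y| * n := by ring
  rw [key]
  calc |(x - y) / y * ((-2) * a + (1 + x / y) * b) + (y * a - x * b) ^ 2 / (y ^ 2 * y')|
      ≤ |(x - y) / y * ((-2) * a + (1 + x / y) * b)|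
        + |(y * a - x * b) ^ 2 / (y ^ 2 * y')| := abs_add_le _ _
    _ = |(x - y) / y * ((-2) * a + (1 + x / y) * b)|
        + (y * a - x * b) ^ 2 / (y ^ 2 * y') := by
          rw [abs_of_nonneg (show (0:ℝ) ≤ (y * a - x * b) ^ 2 / (y ^ 2 * y') by positivity)]
    _ ≤ c * Real.sqrt (4 + (1 + c) ^ 2) * |x - y| * n
        + 4 * c ^ 3 * (a ^ 2 + b ^ 2) := add_le_add hL hR
end

section
/- Let δ ∈ [0, 1/2], ε > 0, T̂ and T be random variables, and Z ~ N(0,1). Then d_K(T̂, Z) ≤ d_K(T, Z) + (1/2)(δ + ε) + P(|T̂ - T| ≥ δ·T + ε), where d_K is the Kolmogorov distance. -/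
/-! Off the event `B = {|T̂ - T| ≥ δ T + ε}`, `T̂ ≤ t` forces `T ≤ (t + ε) / (1 - δ)`, and
`T ≤ (t - ε) / (1 + δ)` forces `T̂ ≤ t`. So the CDF of `T̂` at `t` is within `P(B)` of the CDF of `T`
at one of these two points, which is within `d_K(T, Z)` of `Φ` there. Finally `Φ` moves by at most
`(δ + ε) / 2` between `t` and either point: the shift by `ε` costs at most `ε / 2` because the
Gaussian density is bounded by `1 / √(2π) ≤ 1 / 2`, and the scaling by `(1 - δ)⁻¹ ≤ 1 + 2δ` or
`1 + δ` costs at most `δ / 2` because `x φ(x) ≤ 1 / √(2πe) ≤ 1 / 4`. -/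

open MeasureTheory ProbabilityTheory Real

/-- Kolmogorov distance of a real random variable to the standard normal. -/
noncomputable def kolDistGaussian {Ω : Type*} [MeasurableSpace Ω]
    (μ : Measure Ω) (X : Ω → ℝ) : ℝ :=
  ⨆ t : ℝ, |(μ {ω | X ω ≤ t}).toReal - ((gaussianReal 0 1) (Set.Iic t)).toReal|

open Set

local notation "Φ" => cdf (gaussianReal 0 1)

lemma two_le_sqrt_two_mul_pi : 2 ≤ √(2 * π) :=
  Real.le_sqrt_of_sq_le (by nlinarith [pi_gt_three])

lemma mul_exp_neg_sq_div_two_le (x : ℝ) : x * rexp (-x ^ 2 / 2) ≤ rexp (-(1 / 2)) := by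
  have hx : x ≤ rexp ((x ^ 2 - 1) / 2) := by
    nlinarith [add_one_le_exp ((x ^ 2 - 1) / 2), sq_nonneg (x - 1)]
  calc x * rexp (-x ^ 2 / 2) ≤ rexp ((x ^ 2 - 1) / 2) * rexp (-x ^ 2 / 2) := by gcongr
    _ = rexp (-(1 / 2)) := by rw [← exp_add]; ring_nf

lemma le_div_one_sub_of_abs_sub_lt {x y t δ ε : ℝ} (hδ : δ < 1) (hxy : |x - y| < δ * y + ε)
    (hx : x ≤ t) : y ≤ (t + ε) / (1 - δ) := by
  rw [le_div_iff₀ (by linarith)]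
  linarith [neg_abs_le (x - y)]

lemma le_of_abs_sub_lt_of_le_div_one_add {x y t δ ε : ℝ} (hδ : -1 < δ)
    (hxy : |x - y| < δ * y + ε) (hy : y ≤ (t - ε) / (1 + δ)) : x ≤ t := by
  rw [le_div_iff₀ (by linarith)] at hy
  linarith [le_abs_self (x - y)]

namespace ProbabilityTheory

lemma gaussianPDFReal_zero_one (x : ℝ) :
    gaussianPDFReal 0 1 x = (√(2 * π))⁻¹ * rexp (-x ^ 2 / 2) := by
  simp [gaussianPDFReal]

lemma gaussianPDFReal_zero_one_le (x : ℝ) : gaussianPDFReal 0 1 x ≤ 1 / 2 := by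
  have hexp : rexp (-x ^ 2 / 2) ≤ 1 := exp_le_one_iff.2 (by nlinarith [sq_nonneg x])
  calc gaussianPDFReal 0 1 x ≤ (√(2 * π))⁻¹ * 1 := by
        rw [gaussianPDFReal_zero_one]; gcongr
    _ ≤ 2⁻¹ * 1 := by gcongr; exact two_le_sqrt_two_mul_pi
    _ = 1 / 2 := by norm_num

lemma antitoneOn_gaussianPDFReal_zero_one : AntitoneOn (gaussianPDFReal 0 1) (Ici 0) := by
  intro a ha b _ hab
  simp only [gaussianPDFReal_zero_one]
  gcongr

lemma mul_gaussianPDFReal_zero_one_le (x : ℝ) : x * gaussianPDFReal 0 1 x ≤ 1 / 4 := by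
  have hsq : (4 * rexp (-(1 / 2))) ^ 2 ≤ 2 * π := by
    have he : rexp (-(1 / 2)) ^ 2 * rexp 1 = 1 := by
      rw [← exp_nat_mul, ← exp_add]; norm_num
    nlinarith [pi_gt_three, exp_one_gt_d9, exp_pos 1]
  have hconst : 4 * rexp (-(1 / 2)) ≤ √(2 * π) := Real.le_sqrt_of_sq_le hsq
  have hpos : 0 < √(2 * π) := by positivity
  calc x * gaussianPDFReal 0 1 x = (√(2 * π))⁻¹ * (x * rexp (-x ^ 2 / 2)) := by
        rw [gaussianPDFReal_zero_one]; ring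
    _ ≤ (√(2 * π))⁻¹ * rexp (-(1 / 2)) := by gcongr; exact mul_exp_neg_sq_div_two_le x
    _ ≤ 1 / 4 := by rw [inv_mul_le_iff₀ hpos]; linarith

lemma cdf_sub_cdf_eq_measureReal_Ioc (μ : Measure ℝ) [IsProbabilityMeasure μ] {a b : ℝ}
    (hab : a ≤ b) : cdf μ b - cdf μ a = μ.real (Ioc a b) := by
  have h := (cdf μ).measure_Ioc a b
  rw [measure_cdf] at h
  rw [measureReal_def, h, ENNReal.toReal_ofReal (sub_nonneg.2 (monotone_cdf μ hab))]

lemma cdf_gaussianReal_sub_le {m : ℝ} {v : NNReal} (hv : v ≠ 0) {a b c : ℝ} (hab : a ≤ b)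
    (hc : ∀ x ∈ Ioc a b, gaussianPDFReal m v x ≤ c) :
    cdf (gaussianReal m v) b - cdf (gaussianReal m v) a ≤ c * (b - a) := by
  have hpdf := gaussianPDFReal_nonneg m v
  rw [cdf_sub_cdf_eq_measureReal_Ioc _ hab, measureReal_def, gaussianReal_apply_eq_integral m hv,
    ENNReal.toReal_ofReal (setIntegral_nonneg measurableSet_Ioc fun x _ => hpdf x),
    ← volume_real_Ioc_of_le hab]
  refine (Real.le_norm_self _).trans (norm_setIntegral_le_of_norm_le_const measure_Ioc_lt_top
    fun x hx => ?_)
  rw [Real.norm_of_nonneg (hpdf x)]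
  exact hc x hx

lemma cdf_stdGaussian_sub_le {a b : ℝ} (hab : a ≤ b) : Φ b - Φ a ≤ (b - a) / 2 := by
  have h := cdf_gaussianReal_sub_le one_ne_zero hab fun x _ => gaussianPDFReal_zero_one_le x
  linarith

lemma cdf_stdGaussian_mul_sub_le {β : ℝ} (hβ : 1 ≤ β) (t : ℝ) :
    Φ (β * t) - Φ t ≤ (β - 1) / 4 := by
  rcases le_or_gt t 0 with ht | ht
  · have h : Φ (β * t) ≤ Φ t := monotone_cdf _ (by nlinarith)
    linarith
  · have h := cdf_gaussianReal_sub_le one_ne_zero (by nlinarith : t ≤ β * t) fun x hx =>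
      antitoneOn_gaussianPDFReal_zero_one ht.le (ht.trans hx.1).le hx.1.le
    calc Φ (β * t) - Φ t ≤ gaussianPDFReal 0 1 t * (β * t - t) := h
      _ = (β - 1) * (t * gaussianPDFReal 0 1 t) := by ring
      _ ≤ (β - 1) * (1 / 4) := by
        gcongr
        exact mul_gaussianPDFReal_zero_one_le t
      _ = (β - 1) / 4 := by ring

lemma cdf_stdGaussian_div_one_sub_sub_le {δ ε : ℝ} (hδ0 : 0 ≤ δ) (hδ : δ ≤ 1 / 2) (hε : 0 ≤ ε)
    (t : ℝ) : Φ ((t + ε) / (1 - δ)) - Φ t ≤ (δ + ε) / 2 := by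
  have hδ1 : 0 < 1 - δ := by linarith
  have hβ : (1 - δ)⁻¹ ≤ 1 + 2 * δ := by
    rw [inv_le_iff_one_le_mul₀ hδ1]; nlinarith
  have hscale := cdf_stdGaussian_mul_sub_le (one_le_inv₀ hδ1 |>.2 (by linarith)) (t + ε)
  have hshift := cdf_stdGaussian_sub_le (by linarith : t ≤ t + ε)
  rw [div_eq_inv_mul]
  linarith

lemma cdf_stdGaussian_sub_cdf_div_one_add_le {δ ε : ℝ} (hδ0 : 0 ≤ δ) (hε : 0 ≤ ε) (t : ℝ) :
    Φ t - Φ ((t - ε) / (1 + δ)) ≤ (δ + ε) / 2 := by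
  have hscale := cdf_stdGaussian_mul_sub_le (by linarith : 1 ≤ 1 + δ) ((t - ε) / (1 + δ))
  rw [mul_div_cancel₀ _ (by positivity : 1 + δ ≠ 0)] at hscale
  have hshift := cdf_stdGaussian_sub_le (by linarith : t - ε ≤ t)
  linarith

end ProbabilityTheory

section KolmogorovDistance

variable {Ω : Type*} [MeasurableSpace Ω] (μ : Measure Ω)

lemma kolDistGaussian_eq (X : Ω → ℝ) :
    kolDistGaussian μ X = ⨆ t, |μ.real {ω | X ω ≤ t} - Φ t| := by
  simp only [kolDistGaussian, cdf_eq_real, measureReal_def]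

variable [IsFiniteMeasure μ]

lemma abs_sub_cdf_le_kolDistGaussian (X : Ω → ℝ) (t : ℝ) :
    |μ.real {ω | X ω ≤ t} - Φ t| ≤ kolDistGaussian μ X := by
  rw [kolDistGaussian_eq]
  refine le_ciSup (f := fun s => |μ.real {ω | X ω ≤ s} - Φ s|) ⟨μ.real univ + 1, ?_⟩ t
  rintro _ ⟨s, rfl⟩
  have hle : μ.real {ω | X ω ≤ s} ≤ μ.real univ := measureReal_mono (subset_univ _)
  rw [abs_sub_le_iff]
  constructor <;> linarith [cdf_nonneg (gaussianReal 0 1) s, cdf_le_one (gaussianReal 0 1) s,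
    measureReal_nonneg (μ := μ) (s := {ω | X ω ≤ s})]

lemma kolDistGaussian_le_of_cdf_sandwich {X Y : Ω → ℝ} {η p : ℝ}
    (h : ∀ t, ∃ s₁ s₂, μ.real {ω | X ω ≤ t} ≤ μ.real {ω | Y ω ≤ s₁} + p ∧ Φ s₁ - Φ t ≤ η ∧
      μ.real {ω | Y ω ≤ s₂} ≤ μ.real {ω | X ω ≤ t} + p ∧ Φ t - Φ s₂ ≤ η) :
    kolDistGaussian μ X ≤ kolDistGaussian μ Y + η + p := by
  rw [kolDistGaussian_eq μ X]
  refine ciSup_le fun t => ?_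
  obtain ⟨s₁, s₂, hX, hs₁, hY, hs₂⟩ := h t
  have h₁ := abs_sub_le_iff.1 (abs_sub_cdf_le_kolDistGaussian μ Y s₁)
  have h₂ := abs_sub_le_iff.1 (abs_sub_cdf_le_kolDistGaussian μ Y s₂)
  rw [abs_sub_le_iff]
  constructor <;> linarith [h₁.1, h₂.2]

lemma measureReal_setOf_le_le_add {X Y : Ω → ℝ} {B : Set Ω} {t s : ℝ}
    (h : ∀ ω ∉ B, X ω ≤ t → Y ω ≤ s) :
    μ.real {ω | X ω ≤ t} ≤ μ.real {ω | Y ω ≤ s} + μ.real B := by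
  refine (measureReal_mono fun ω hω => ?_).trans (measureReal_union_le _ _)
  by_cases hB : ω ∈ B
  · exact Or.inr hB
  · exact Or.inl (h ω hB hω)

end KolmogorovDistance

/-- For `δ ∈ [0, 1/2]`, `ε > 0`, random variables `T̂, T` and
`Z ~ N(0,1)`:
`d_K(T̂, Z) ≤ d_K(T, Z) + (1/2)(δ + ε) + P(|T̂ - T| ≥ δ T + ε)`. -/
theorem kolDist_perturb {Ω : Type*} [MeasurableSpace Ω]
    (μ : Measure Ω) [IsProbabilityMeasure μ] (That T : Ω → ℝ)
    (δ ε : ℝ) (hδ0 : 0 ≤ δ) (hδ : δ ≤ 1 / 2) (hε : 0 < ε) :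
    kolDistGaussian μ That
      ≤ kolDistGaussian μ T + (1 / 2) * (δ + ε)
        + (μ {ω | |That ω - T ω| ≥ δ * T ω + ε}).toReal := by
  have hgood : ∀ ω ∉ {ω | |That ω - T ω| ≥ δ * T ω + ε}, |That ω - T ω| < δ * T ω + ε :=
    fun ω hω => not_le.1 hω
  refine kolDistGaussian_le_of_cdf_sandwich μ fun t =>
    ⟨(t + ε) / (1 - δ), (t - ε) / (1 + δ), ?_, ?_, ?_, ?_⟩
  · exact measureReal_setOf_le_le_add μ fun ω hω =>
      le_div_one_sub_of_abs_sub_lt (by linarith) (hgood ω hω)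
  · linarith [cdf_stdGaussian_div_one_sub_sub_le hδ0 hδ hε.le t]
  · exact measureReal_setOf_le_le_add μ fun ω hω =>
      le_of_abs_sub_lt_of_le_div_one_add (by linarith) (hgood ω hω)
  · linarith [cdf_stdGaussian_sub_cdf_div_one_add_le hδ0 hε.le t]
end

section
/- Let A_j ~ Poisson(λ_j) and U_j ~ Bernoulli(1/2) for j = 1,...,n, all mutually independent, and let d = Σ_{j=1}^n A_j U_j with d̄ = E[d] = (1/2)Σ_j λ_j. Then P(|d - d̄| ≥ d̄/2) ≤ 2·e^{-0.008·d̄} + 4·e^{-0.03·d̄/λ_max}, where λ_max = max_j λ_j. -/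
/-!
The thinned term `A_j U_j` has moment generating function `(1 + exp (λ_j c)) / 2` with
`c = eᵗ - 1`. Hoeffding's bound `(1 + eᵃ) / 2 ≤ exp (a / 2 + a² / 8)` together with
`λ_j² ≤ λ_max λ_j` gives `mgf d t ≤ exp (d̄ (c + λ_max c² / 4))`. Chernoff's bound at `±t`,
with `e^{±t} - 1` replaced by their second-order Taylor bounds, gives
`P(|d - d̄| ≥ d̄/2) ≤ 2 exp (d̄ (λ_max t² / 2 - 2t / 5))` for `0 ≤ t ≤ 1/10`; take `t = 1/10`
when `λ_max ≤ 5/2` and `t = 1 / (4 λ_max)` otherwise.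
-/

open MeasureTheory ProbabilityTheory Finset Real
open scoped NNReal Nat

section Independence

variable {Ω ι : Type*} [MeasurableSpace Ω] {μ : Measure Ω}

/-- The preimages of rectangles under `ω ↦ (X (.inl j) ω, X (.inr j) ω)` form a generating
π-system, and on them independence is that of `X` restricted to `t.disjSum t`. -/
theorem ProbabilityTheory.iIndepFun.prodMk_inl_inr {β : Type*} [MeasurableSpace β]
    {X : ι ⊕ ι → Ω → β} (hX : ∀ i, Measurable (X i)) (h : iIndepFun X μ) :
    iIndepFun (fun j ω ↦ (X (.inl j) ω, X (.inr j) ω)) μ := by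
  classical
  set pair : ι → Ω → β × β := fun j ω ↦ (X (.inl j) ω, X (.inr j) ω)
  rw [iIndepFun_iff_iIndep]
  refine iIndepSets.iIndep (fun j ↦ ((hX _).prodMk (hX _)).comap_le)
    (fun j ↦ {s | ∃ t ∈ Set.image2 (· ×ˢ ·) {s | MeasurableSet s} {t | MeasurableSet t},
      pair j ⁻¹' t = s}) (fun j ↦ isPiSystem_prod.comap (pair j))
    (fun j ↦ by rw [← generateFrom_prod, MeasurableSpace.comap_generateFrom]; rfl) ?_
  rw [iIndepSets_iff]
  intro s f hf
  simp only [Set.mem_ofPred_eq, Set.mem_image2, exists_exists_and_exists_and_eq_and] at hf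
  choose! a ha b hb hab using hf
  have measure_biInter : ∀ t ⊆ s, μ (⋂ j ∈ t, f j)
      = ∏ j ∈ t, μ (X (.inl j) ⁻¹' a j) * μ (X (.inr j) ⁻¹' b j) := by
    intro t hts
    have hinter : ⋂ j ∈ t, f j = ⋂ i ∈ t.disjSum t,
        Sum.elim (fun j ↦ X (.inl j) ⁻¹' a j) (fun j ↦ X (.inr j) ⁻¹' b j) i := by
      rw [← Set.iInter₂_congr fun j hj ↦ hab j (hts hj)]
      ext ω
      simp [pair, forall_and]
    rw [hinter, (iIndepFun_iff _ _ _).1 h (t.disjSum t), Finset.prod_disjSum,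
      Finset.prod_mul_distrib]
    · rfl
    rintro (j | j) hj
    · exact ⟨a j, ha j (hts (by simpa using hj)), rfl⟩
    · exact ⟨b j, hb j (hts (by simpa using hj)), rfl⟩
  rw [measure_biInter s subset_rfl]
  refine Finset.prod_congr rfl fun j hj ↦ ?_
  simpa using (measure_biInter {j} (by simpa using hj)).symm

end Independence

section Poisson

lemma poisson_weight_mul_exp (r : ℝ≥0) (t : ℝ) (n : ℕ) :
    exp (-r) * r ^ n / n ! * exp (t * n) = exp (-r) * ((r * exp t) ^ n / n !) := by
  rw [mul_comm t, exp_nat_mul, mul_pow]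
  ring

lemma integrable_exp_mul_poissonMeasure (r : ℝ≥0) (t : ℝ) :
    Integrable (fun n : ℕ ↦ exp (t * n)) (poissonMeasure r) := by
  refine integrable_poissonMeasure_iff.2 ?_
  simp_rw [norm_of_nonneg (exp_pos _).le, poisson_weight_mul_exp]
  exact (summable_pow_div_factorial _).mul_left _

lemma integral_exp_mul_poissonMeasure (r : ℝ≥0) (t : ℝ) :
    ∫ n : ℕ, exp (t * n) ∂poissonMeasure r = exp (r * (exp t - 1)) := by
  refine (hasSum_integral_poissonMeasure (integrable_exp_mul_poissonMeasure r t)).unique ?_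
  simp_rw [smul_eq_mul, poisson_weight_mul_exp]
  have h := (NormedSpace.expSeries_div_hasSum_exp ((r : ℝ) * exp t)).mul_left (exp (-r))
  rw [← exp_eq_exp_ℝ, ← exp_add] at h
  rwa [show (r : ℝ) * (exp t - 1) = -r + r * exp t by ring]

variable {Ω : Type*} [MeasurableSpace Ω] {μ : Measure Ω} {A : Ω → ℕ} {r : ℝ≥0}

lemma ProbabilityTheory.HasLaw.mgf_natCast_poissonMeasure (hA : HasLaw A (poissonMeasure r) μ)
    (t : ℝ) : mgf (fun ω ↦ (A ω : ℝ)) μ t = exp (r * (exp t - 1)) :=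
  (hA.integral_comp (f := fun n : ℕ ↦ exp (t * n))
    (integrable_exp_mul_poissonMeasure r t).aestronglyMeasurable).trans
    (integral_exp_mul_poissonMeasure r t)

lemma ProbabilityTheory.HasLaw.integrable_exp_mul_natCast_poissonMeasure
    (hA : HasLaw A (poissonMeasure r) μ) (t : ℝ) :
    Integrable (fun ω ↦ exp (t * A ω)) μ := by
  have h := integrable_exp_mul_poissonMeasure r t
  rw [← hA.map_eq] at h
  exact (integrable_map_measure h.aestronglyMeasurable hA.aemeasurable).1 h

end Poisson

section Thinning

variable {Ω : Type*} [MeasurableSpace Ω] {μ : Measure Ω} [IsProbabilityMeasure μ]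

lemma ProbabilityTheory.IndepFun.mgf_mul_of_eq_zero_or_one {A U : Ω → ℝ} (hAU : IndepFun A U μ)
    (hUm : Measurable U) (hU : ∀ ω, U ω = 0 ∨ U ω = 1) {t : ℝ}
    (hA : Integrable (fun ω ↦ exp (t * A ω)) μ) :
    mgf (fun ω ↦ A ω * U ω) μ t
      = 1 - μ.real {ω | U ω = 1} + μ.real {ω | U ω = 1} * mgf A μ t := by
  have hs : MeasurableSet {ω | U ω = 1} := hUm (measurableSet_singleton 1)
  have hU_ind : U = Set.indicator {ω | U ω = 1} 1 := by
    ext ω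
    rcases hU ω with h | h <;> simp [h]
  have hU_int : Integrable U μ := by
    rw [hU_ind]
    exact (integrable_const 1).indicator hs
  have hEU : ∫ ω, U ω ∂μ = μ.real {ω | U ω = 1} := by
    conv_lhs => rw [hU_ind]
    exact integral_indicator_one hs
  have hA' : Integrable (fun ω ↦ exp (t * A ω) - 1) μ := hA.sub (integrable_const 1)
  have hindep : IndepFun U (fun ω ↦ exp (t * A ω) - 1) μ :=
    hAU.symm.comp measurable_id (show Measurable fun x ↦ exp (t * x) - 1 by fun_prop)
  have hprod : Integrable (fun ω ↦ U ω * (exp (t * A ω) - 1)) μ :=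
    hindep.integrable_mul hU_int hA'
  have hexp : (fun ω ↦ exp (t * (A ω * U ω))) = fun ω ↦ 1 + U ω * (exp (t * A ω) - 1) := by
    ext ω
    rcases hU ω with h | h <;> simp [h]
  rw [mgf, hexp, integral_add (integrable_const 1) hprod,
    hindep.integral_fun_mul_eq_mul_integral hU_int.aestronglyMeasurable hA'.aestronglyMeasurable,
    integral_sub hA (integrable_const 1), hEU, mgf]
  simp only [integral_const, probReal_univ, smul_eq_mul, mul_one]
  ring

lemma mgf_natCast_mul_natCast_of_poisson_of_bernoulli_half {A U : Ω → ℕ} {r : ℝ≥0}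
    (hA : HasLaw A (poissonMeasure r) μ) (hUm : Measurable U) (hAU : IndepFun A U μ)
    (hU01 : ∀ ω, U ω = 0 ∨ U ω = 1) (hU : μ {ω | U ω = 1} = 1 / 2) (t : ℝ) :
    mgf (fun ω ↦ (A ω : ℝ) * U ω) μ t = (1 + exp (r * (exp t - 1))) / 2 := by
  have hAU' : IndepFun (fun ω ↦ (A ω : ℝ)) (fun ω ↦ (U ω : ℝ)) μ :=
    hAU.comp measurable_from_nat measurable_from_nat
  have hp : μ.real {ω | (U ω : ℝ) = 1} = 1 / 2 := by
    simp [measureReal_def, hU]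
  rw [hAU'.mgf_mul_of_eq_zero_or_one (by fun_prop)
    (fun ω ↦ by rcases hU01 ω with h | h <;> simp [h])
    (hA.integrable_exp_mul_natCast_poissonMeasure t), hA.mgf_natCast_poissonMeasure, hp]
  ring

end Thinning

section Chernoff

lemma one_add_exp_div_two_le (a : ℝ) : (1 + exp a) / 2 ≤ exp (a / 2 + a ^ 2 / 8) :=
  calc (1 + exp a) / 2 = exp (a / 2) * cosh (a / 2) := by
        rw [cosh_eq, mul_div_assoc', mul_add, ← exp_add, ← exp_add, add_neg_cancel, exp_zero,
          add_halves, add_comm]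
    _ ≤ exp (a / 2) * exp ((a / 2) ^ 2 / 2) := by gcongr; exact cosh_le_exp_half_sq _
    _ = exp (a / 2 + a ^ 2 / 8) := by rw [← exp_add]; ring_nf

lemma one_add_exp_mul_div_two_le {l L : ℝ} (hl : 0 ≤ l) (hlL : l ≤ L) (c : ℝ) :
    (1 + exp (l * c)) / 2 ≤ exp (l / 2 * (c + L * c ^ 2 / 4)) := by
  refine (one_add_exp_div_two_le _).trans (exp_le_exp.2 ?_)
  nlinarith [mul_le_mul_of_nonneg_right hlL (mul_nonneg hl (sq_nonneg c))]

variable {Ω ι : Type*} [MeasurableSpace Ω] {μ : Measure Ω}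

lemma ProbabilityTheory.iIndepFun.mgf_sum_le {Y : ι → Ω → ℝ} (hY : iIndepFun Y μ)
    (hYm : ∀ j, Measurable (Y j)) {l : ι → ℝ} {L t : ℝ} (hl : ∀ j, 0 ≤ l j) (hlL : ∀ j, l j ≤ L)
    (hmgf : ∀ j, mgf (Y j) μ t = (1 + exp (l j * (exp t - 1))) / 2) (s : Finset ι) :
    mgf (∑ j ∈ s, Y j) μ t
      ≤ exp ((∑ j ∈ s, l j) / 2 * ((exp t - 1) + L * (exp t - 1) ^ 2 / 4)) := by
  rw [hY.mgf_sum hYm, Finset.sum_div, Finset.sum_mul, exp_sum]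
  exact Finset.prod_le_prod (fun j _ ↦ by rw [hmgf]; positivity)
    fun j _ ↦ (hmgf j).trans_le (one_add_exp_mul_div_two_le (hl j) (hlL j) _)

lemma measureReal_abs_sub_ge_le_of_mgf_le [IsFiniteMeasure μ] {d : Ω → ℝ} {m L t : ℝ}
    (hm : 0 ≤ m) (hL : 0 ≤ L) (ht0 : 0 ≤ t) (ht : t ≤ 1 / 10)
    (hint : ∀ s, Integrable (fun ω ↦ exp (s * d ω)) μ)
    (hmgf : ∀ s, mgf d μ s ≤ exp (m * ((exp s - 1) + L * (exp s - 1) ^ 2 / 4))) :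
    μ.real {ω | m / 2 ≤ |d ω - m|} ≤ 2 * exp (m * (L * t ^ 2 / 2 - 2 * t / 5)) := by
  have chernoff : ∀ s ε, exp (-s * ε) * mgf d μ s
      ≤ exp (-s * ε + m * ((exp s - 1) + L * (exp s - 1) ^ 2 / 4)) := fun s ε ↦ by
    rw [exp_add]; gcongr; exact hmgf s
  have ht2 : t ^ 2 ≤ t / 10 := by nlinarith
  have exp_le : exp t - 1 - t ≤ t ^ 2 :=
    (abs_le.1 (abs_exp_sub_one_sub_id_le (abs_le.2 ⟨by linarith, by linarith⟩))).2
  have exp_neg_le : exp (-t) - 1 - -t ≤ (-t) ^ 2 :=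
    (abs_le.1 (abs_exp_sub_one_sub_id_le (abs_le.2 ⟨by linarith, by linarith⟩))).2
  have upper : μ.real {ω | 3 * m / 2 ≤ d ω} ≤ exp (m * (L * t ^ 2 / 2 - 2 * t / 5)) := by
    refine (measure_ge_le_exp_mul_mgf _ ht0 (hint t)).trans ((chernoff _ _).trans ?_)
    gcongr
    set c := exp t - 1
    have hc2 : c ^ 2 ≤ (11 * t / 10) ^ 2 :=
      sq_le_sq' (by linarith [add_one_le_exp t]) (by linarith)
    have key : -t * (3 / 2) + (c + L * c ^ 2 / 4) ≤ L * t ^ 2 / 2 - 2 * t / 5 := by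
      nlinarith [mul_le_mul_of_nonneg_left hc2 hL]
    nlinarith [mul_le_mul_of_nonneg_left key hm]
  have lower : μ.real {ω | d ω ≤ m / 2} ≤ exp (m * (L * t ^ 2 / 2 - 2 * t / 5)) := by
    refine (measure_le_le_exp_mul_mgf _ (neg_nonpos.2 ht0) (hint (-t))).trans
      ((chernoff _ _).trans ?_)
    gcongr
    set b := exp (-t) - 1
    have hb2 : b ^ 2 ≤ t ^ 2 := sq_le_sq' (by linarith [add_one_le_exp (-t)]) (by linarith)
    have key : t / 2 + (b + L * b ^ 2 / 4) ≤ L * t ^ 2 / 2 - 2 * t / 5 := by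
      nlinarith [mul_le_mul_of_nonneg_left hb2 hL]
    nlinarith [mul_le_mul_of_nonneg_left key hm]
  calc μ.real {ω | m / 2 ≤ |d ω - m|}
      ≤ μ.real ({ω | 3 * m / 2 ≤ d ω} ∪ {ω | d ω ≤ m / 2}) := by
        refine measureReal_mono fun ω hω ↦ ?_
        simp only [Set.mem_ofPred_eq, Set.mem_union] at hω ⊢
        rcases le_abs'.1 hω with h | h
        · right; linarith
        · left; linarith
    _ ≤ _ := (measureReal_union_le _ _).trans (by linarith)

lemma exists_two_mul_exp_le {m L : ℝ} (hm : 0 ≤ m) :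
    ∃ t, 0 ≤ t ∧ t ≤ 1 / 10 ∧ 2 * exp (m * (L * t ^ 2 / 2 - 2 * t / 5))
      ≤ 2 * exp (-0.008 * m) + 4 * exp (-0.03 * m / L) := by
  rcases le_or_gt L (5 / 2) with hL | hL
  · refine ⟨1 / 10, by norm_num, le_rfl, ?_⟩
    have : exp (m * (L * (1 / 10) ^ 2 / 2 - 2 * (1 / 10) / 5)) ≤ exp (-0.008 * m) :=
      exp_le_exp.2 (by nlinarith)
    linarith [exp_pos (-0.03 * m / L)]
  · refine ⟨1 / (4 * L), by positivity,
      by rw [div_le_div_iff₀ (by positivity) (by norm_num)]; linarith, ?_⟩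
    have : exp (m * (L * (1 / (4 * L)) ^ 2 / 2 - 2 * (1 / (4 * L)) / 5))
        ≤ exp (-0.03 * m / L) := by
      refine exp_le_exp.2 (calc
        _ = -(11 / 160) * m / L := by field_simp; ring
        _ ≤ _ := by gcongr; norm_num)
    linarith [exp_pos (-0.008 * m), exp_pos (-0.03 * m / L)]

end Chernoff

-- `X (.inl j)` is `A j` and `X (.inr j)` is `U j`.
theorem thinned_poisson_sum_concentration_general
    {Ω : Type*} [MeasurableSpace Ω] (μ : Measure Ω) [IsProbabilityMeasure μ]
    (n : ℕ) (lam : Fin n → ℝ≥0)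
    (X : Fin n ⊕ Fin n → Ω → ℕ)
    (hmeas : ∀ j, Measurable (X j))
    (hindep : iIndepFun X μ)
    (hA : ∀ j : Fin n, Measure.map (X (Sum.inl j)) μ = poissonMeasure (lam j))
    (hU01 : ∀ (j : Fin n) (ω : Ω), X (Sum.inr j) ω = 0 ∨ X (Sum.inr j) ω = 1)
    (hU : ∀ j : Fin n, μ {ω | X (Sum.inr j) ω = 1} = 1 / 2) :
    μ {ω | |((∑ j, X (Sum.inl j) ω * X (Sum.inr j) ω : ℕ) : ℝ)
              - (1 / 2) * ∑ j, (lam j : ℝ)| ≥ ((1 / 2) * ∑ j, (lam j : ℝ)) / 2}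
      ≤ ENNReal.ofReal
          (2 * Real.exp (-0.008 * ((1 / 2) * ∑ j, (lam j : ℝ)))
            + 4 * Real.exp (-0.03 * ((1 / 2) * ∑ j, (lam j : ℝ)) / (⨆ j, (lam j : ℝ)))) := by
  set m := (1 / 2) * ∑ j, (lam j : ℝ)
  set L := ⨆ j, (lam j : ℝ)
  set Y : Fin n → Ω → ℝ := fun j ω ↦ (X (.inl j) ω : ℝ) * X (.inr j) ω
  have hYm : ∀ j, Measurable (Y j) := fun j ↦ by fun_prop
  have hY : iIndepFun Y μ :=
    (hindep.prodMk_inl_inr hmeas).comp (fun _ p ↦ (p.1 : ℝ) * p.2) fun _ ↦ by fun_prop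
  have hYmgf : ∀ t j, mgf (Y j) μ t = (1 + exp (lam j * (exp t - 1))) / 2 := fun t j ↦
    mgf_natCast_mul_natCast_of_poisson_of_bernoulli_half ⟨(hmeas _).aemeasurable, hA j⟩
      (hmeas _) (hindep.indepFun Sum.inl_ne_inr) (hU01 j) (hU j) t
  have hmgf : ∀ t, mgf (∑ j, Y j) μ t ≤ exp (m * ((exp t - 1) + L * (exp t - 1) ^ 2 / 4)) :=
    fun t ↦ (hY.mgf_sum_le hYm (fun j ↦ (lam j).2) (le_ciSup (Set.finite_range _).bddAbove)
      (hYmgf t) univ).trans_eq (by rw [← one_div_mul_eq_div]; rfl)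
  have hint : ∀ t, Integrable (fun ω ↦ exp (t * (∑ j, Y j) ω)) μ := fun t ↦
    Integrable.of_integral_ne_zero (show mgf (∑ j, Y j) μ t ≠ 0 by
      rw [hY.mgf_sum hYm]; simp_rw [hYmgf]; positivity)
  obtain ⟨t, ht0, ht, hbound⟩ := exists_two_mul_exp_le (m := m) (L := L) (by positivity)
  have hd : {ω | |((∑ j, X (.inl j) ω * X (.inr j) ω : ℕ) : ℝ) - m| ≥ m / 2}
      = {ω | m / 2 ≤ |(∑ j, Y j) ω - m|} := by
    ext ω
    simp [Y]
  rw [hd, ← ofReal_measureReal]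
  exact ENNReal.ofReal_le_ofReal ((measureReal_abs_sub_ge_le_of_mgf_le (by positivity)
    (Real.iSup_nonneg fun j ↦ (lam j).2) ht0 ht hint hmgf).trans hbound)

/-- Let `A j ~ Poisson(λ j)` and `U j ~ Bernoulli(1/2)` for
`j = 1, ..., n`, all mutually independent (`U j` is `{0,1}`-valued), and let
`d = ∑ j, A j * U j` with `d̄ = E[d] = (1/2) ∑ j, λ j`. Then
`P(|d - d̄| ≥ d̄/2) ≤ 2 e^{-0.008 d̄} + 4 e^{-0.03 d̄ / λmax}`, with
`λmax = max_j λ j`. The `A`'s and `U`'s are encoded as a single mutually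
independent family `X : Fin n ⊕ Fin n → Ω → ℕ`. -/
theorem thinned_poisson_sum_concentration
    {Ω : Type*} [MeasurableSpace Ω] (μ : Measure Ω) [IsProbabilityMeasure μ]
    (n : ℕ) (hn : 0 < n) (lam : Fin n → ℝ≥0)
    (X : Fin n ⊕ Fin n → Ω → ℕ)
    (hmeas : ∀ j, Measurable (X j))
    (hindep : iIndepFun X μ)
    (hA : ∀ j : Fin n, Measure.map (X (Sum.inl j)) μ = poissonMeasure (lam j))
    (hU01 : ∀ (j : Fin n) (ω : Ω), X (Sum.inr j) ω = 0 ∨ X (Sum.inr j) ω = 1)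
    (hU : ∀ j : Fin n, μ {ω | X (Sum.inr j) ω = 1} = 1 / 2) :
    μ {ω | |((∑ j, X (Sum.inl j) ω * X (Sum.inr j) ω : ℕ) : ℝ)
              - (1 / 2) * ∑ j, (lam j : ℝ)| ≥ ((1 / 2) * ∑ j, (lam j : ℝ)) / 2}
      ≤ ENNReal.ofReal
          (2 * Real.exp (-0.008 * ((1 / 2) * ∑ j, (lam j : ℝ)))
            + 4 * Real.exp (-0.03 * ((1 / 2) * ∑ j, (lam j : ℝ)) / (⨆ j, (lam j : ℝ)))) :=
  thinned_poisson_sum_concentration_general μ n lam X hmeas hindep hA hU01 hU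
end
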